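/- arXiv:1910.11864 — 2 statements merged into one kernel-verified Lean document; each statement's English description precedes it below -/
import Mathlib

section
/- Bounded solutions of the variational and adjoint variational equations for DNLS: let d ≠ 0, ω ∈ ℝ, and let q: ℤ → ℝ² satisfy d(Δ₂q)_n − ω q_n + |q_n|² q_n = 0 for all n ∈ ℤ. For u ∈ ℝ² let f(u) = |u|²u, with derivative Df(u) = |u|² I + 2 u uᵀ, and define the 4×4 matrices DF(n) = [[(2 + ω/d) I₂ − (1/d) Df(q_n), −I₂], [I₂, 0]] (2×2 blocks). Then: (i) V(n) = (J q_n, J q_{n−1}) ∈ ℝ⁴ satisfies V(n+1) = DF(n) V(n) for all n ∈ ℤ; (ii) Z(n) = (J q_{n−1}, −J q_n) ∈ ℝ⁴ satisfies Z(n) = DF(n)* Z(n+1) for all n ∈ ℤ. -/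
open Matrix

/-- The standard symplectic matrix `J = [[0, 1], [−1, 0]]`. -/
def Jmat : Matrix (Fin 2) (Fin 2) ℝ := !![0, 1; -1, 0]

/-- The derivative `Df(u) = |u|²I + 2uuᵀ` of the cubic nonlinearity `f(u) = |u|²u` on ℝ². -/
noncomputable def Dfmat (u : Fin 2 → ℝ) : Matrix (Fin 2) (Fin 2) ℝ :=
  (u 0 ^ 2 + u 1 ^ 2) • (1 : Matrix (Fin 2) (Fin 2) ℝ) + (2 : ℝ) • Matrix.vecMulVec u u

/-- The linearization `DF(n) = [[(2 + ω/d)I − (1/d)Df(q_n), −I], [I, 0]]` of the spatial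
dynamics map along the orbit `Q(n) = (q_n, q_{n−1})`. -/
noncomputable def DFmat (d ω : ℝ) (q : ℤ → Fin 2 → ℝ) (n : ℤ) :
    Matrix (Fin 2 ⊕ Fin 2) (Fin 2 ⊕ Fin 2) ℝ :=
  Matrix.fromBlocks ((2 + ω / d) • (1 : Matrix (Fin 2) (Fin 2) ℝ) - (1 / d) • Dfmat (q n))
    (-1) 1 0

/-- Bounded solutions of the variational and adjoint variational equations for DNLS: if
`q : ℤ → ℝ²` solves `d(Δ₂q)_n − ωq_n + |q_n|²q_n = 0`, then (i) `V(n) = (Jq_n, Jq_{n−1})`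
solves `V(n+1) = DF(n)V(n)`, and (ii) `Z(n) = (Jq_{n−1}, −Jq_n)` solves `Z(n) = DF(n)*Z(n+1)`. -/
theorem dnls_variational_solutions (d ω : ℝ) (hd : d ≠ 0) (q : ℤ → Fin 2 → ℝ)
    (hq : ∀ (n : ℤ) (i : Fin 2),
      d * (q (n + 1) i - 2 * q n i + q (n - 1) i) - ω * q n i
        + (q n 0 ^ 2 + q n 1 ^ 2) * q n i = 0) :
    (∀ n : ℤ,
      Sum.elim (Jmat.mulVec (q (n + 1))) (Jmat.mulVec (q n))
        = (DFmat d ω q n).mulVec (Sum.elim (Jmat.mulVec (q n)) (Jmat.mulVec (q (n - 1))))) ∧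
    (∀ n : ℤ,
      Sum.elim (Jmat.mulVec (q (n - 1))) (-(Jmat.mulVec (q n)))
        = ((DFmat d ω q n)ᵀ).mulVec
            (Sum.elim (Jmat.mulVec (q n)) (-(Jmat.mulVec (q (n + 1)))))) := by
  have key : ∀ (n : ℤ) (i : Fin 2),
      q (n + 1) i = (2 + ω / d) * q n i - (q n 0 ^ 2 + q n 1 ^ 2) / d * q n i - q (n - 1) i := by
    intro n i
    have h := hq n i
    field_simp
    linarith
  constructor <;> intro n <;> funext i <;> rcases i with i | i <;> fin_cases i <;>
    simp [DFmat, Dfmat, Jmat, Matrix.fromBlocks_transpose, Matrix.fromBlocks_mulVec,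
      Matrix.mulVec, dotProduct, Fin.sum_univ_two, Matrix.vecMulVec,
      Matrix.one_apply, Matrix.sub_apply, Matrix.smul_apply, Matrix.neg_apply,
      Matrix.transpose_apply, key n] <;> ring
end

section
/- Differentiability and gradient of the DNLS Hamiltonian: let d ∈ ℝ and define ℋ: ℓ²(ℤ, ℝ²) → ℝ by ℋ(u) = −Σ_{n∈ℤ} [ (d/2)|u_n − u_{n−1}|² − (1/4)|u_n|⁴ ], where u_n = (v_n, w_n). Then ℋ is well defined and Fréchet differentiable on ℓ²(ℤ, ℝ²), and its gradient is given componentwise by (∇ℋ(u))_n = d(u_{n+1} − 2u_n + u_{n−1}) + |u_n|² u_n, which again defines an element of ℓ²(ℤ, ℝ²). -/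
open scoped RealInnerProductSpace ENNReal

noncomputable section DNLSaux

abbrev Vsp := EuclideanSpace ℝ (Fin 2)
abbrev Esp := lp (fun _ : ℤ => Vsp) 2

lemma memℓp_two_iff (f : ℤ → Vsp) : Memℓp f 2 ↔ Summable fun n => ‖f n‖^2 := by
  rw [memℓp_gen_iff (p := 2) (by norm_num)]
  have : ∀ x : ℝ, x ^ ((2:ℝ≥0∞).toReal) = x ^ 2 := fun x => by
    rw [show ((2:ℝ≥0∞).toReal) = (2:ℝ) by norm_num, Real.rpow_two]
  simp only [this]

lemma sq_summable (u : Esp) : Summable fun n => ‖u n‖^2 :=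
  (memℓp_two_iff u).1 (lp.memℓp u)

lemma sq_summable_sub (u : Esp) : Summable fun n : ℤ => ‖u (n-1)‖^2 :=
  (sq_summable u).comp_injective (sub_left_injective (G := ℤ))

lemma sq_summable_add (u : Esp) : Summable fun n : ℤ => ‖u (n+1)‖^2 :=
  (sq_summable u).comp_injective (add_left_injective (1:ℤ))

lemma norm_sq_eq (u : Esp) : ‖u‖^2 = ∑' n, ‖u n‖^2 := by
  rw [← real_inner_self_eq_norm_sq, lp.inner_eq_tsum]
  exact tsum_congr fun n => real_inner_self_eq_norm_sq _

lemma apply_le_norm (u : Esp) (n : ℤ) : ‖u n‖ ≤ ‖u‖ :=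
  lp.norm_apply_le_norm two_ne_zero u n

lemma summable_inner_seq (x y : ℤ → Vsp) (hx : Summable fun n => ‖x n‖^2)
    (hy : Summable fun n => ‖y n‖^2) : Summable fun n => ⟪x n, y n⟫ := by
  refine Summable.of_abs (Summable.of_nonneg_of_le (fun n => abs_nonneg _)
    (fun n => ?_) (((hx.add hy).mul_left (1/2)) : Summable fun n => 1/2*(‖x n‖^2 + ‖y n‖^2)))
  refine (abs_real_inner_le_norm _ _).trans ?_
  nlinarith [sq_nonneg (‖x n‖ - ‖y n‖), norm_nonneg (x n), norm_nonneg (y n)]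

lemma sq_summable_diff (u h : Esp) : Summable fun n : ℤ => ‖u n - h (n-1)‖^2 := by
  refine Summable.of_nonneg_of_le (fun n => sq_nonneg _) (fun n => ?_)
    (((sq_summable u).add (sq_summable_sub h)).mul_left 2)
  have := norm_sub_le (u n) (h (n-1))
  nlinarith [sq_nonneg (‖u n‖ - ‖h (n-1)‖), norm_nonneg (u n), norm_nonneg (h (n-1)),
    norm_nonneg (u n - h (n-1))]

/-- summability of the quartic term -/
lemma quartic_summable (u : Esp) : Summable fun n : ℤ => ‖u n‖^4 := by
  refine Summable.of_nonneg_of_le (fun n => by positivity) (fun n => ?_)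
    ((sq_summable u).mul_left (‖u‖^2))
  have h1 := apply_le_norm u n
  have h2 := norm_nonneg (u n)
  nlinarith [sq_nonneg (‖u n‖), mul_le_mul_of_nonneg_right (mul_le_mul h1 h1 h2 (norm_nonneg u)) (sq_nonneg (‖u n‖))]

/-- Part 1: the defining series is summable. -/
lemma Fd_summable (d : ℝ) (u : Esp) :
    Summable fun n : ℤ => d / 2 * ‖u n - u (n - 1)‖ ^ 2 - 1 / 4 * ‖u n‖ ^ 4 :=
  ((sq_summable_diff u u).mul_left (d/2)).sub ((quartic_summable u).mul_left (1/4))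


/-- the gradient sequence -/
def gseq (d : ℝ) (u : Esp) (n : ℤ) : Vsp :=
  d • (u (n + 1) - (2 : ℝ) • u n + u (n - 1)) + ‖u n‖ ^ 2 • u n

lemma gseq_memℓp (d : ℝ) (u : Esp) : Memℓp (gseq d u) 2 := by
  rw [memℓp_two_iff]
  have hb : ∀ n : ℤ, ‖gseq d u n‖ ≤
      |d| * ‖u (n+1)‖ + (2*|d|) * ‖u n‖ + |d| * ‖u (n-1)‖ + ‖u‖^2 * ‖u n‖ := by
    intro n
    refine (norm_add_le _ _).trans ?_
    have h1 : ‖d • (u (n + 1) - (2 : ℝ) • u n + u (n - 1))‖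
        ≤ |d| * (‖u (n+1)‖ + 2 * ‖u n‖ + ‖u (n-1)‖) := by
      rw [norm_smul, Real.norm_eq_abs]
      refine mul_le_mul_of_nonneg_left ?_ (abs_nonneg d)
      refine (norm_add_le _ _).trans ?_
      have := norm_sub_le (u (n+1)) ((2:ℝ) • u n)
      rw [norm_smul] at this
      simp only [Real.norm_eq_abs] at this
      rw [abs_of_nonneg (by norm_num : (0:ℝ) ≤ 2)] at this
      linarith
    have h2 : ‖(‖u n‖ ^ 2 • u n : Vsp)‖ ≤ ‖u‖^2 * ‖u n‖ := by
      rw [norm_smul, Real.norm_eq_abs, abs_of_nonneg (sq_nonneg _)]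
      exact mul_le_mul_of_nonneg_right
        (pow_le_pow_left₀ (norm_nonneg _) (apply_le_norm u n) 2) (norm_nonneg (u n))
    linarith
  refine Summable.of_nonneg_of_le (fun n => sq_nonneg _) (fun n => ?_)
    ((((sq_summable_add u).mul_left (4*d^2)).add
      ((sq_summable u).mul_left (16*d^2 + 4*‖u‖^4))).add
      ((sq_summable_sub u).mul_left (4*d^2)))
  have h0 := hb n
  have h3 := norm_nonneg (gseq d u n)
  nlinarith [sq_nonneg (|d| * ‖u (n+1)‖ - 2*|d| * ‖u n‖),
    sq_nonneg (|d| * ‖u (n+1)‖ - |d| * ‖u (n-1)‖),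
    sq_nonneg (|d| * ‖u (n+1)‖ - ‖u‖^2 * ‖u n‖),
    sq_nonneg (2*|d| * ‖u n‖ - |d| * ‖u (n-1)‖),
    sq_nonneg (2*|d| * ‖u n‖ - ‖u‖^2 * ‖u n‖),
    sq_nonneg (|d| * ‖u (n-1)‖ - ‖u‖^2 * ‖u n‖),
    sq_abs d, abs_nonneg d, norm_nonneg (u (n+1)), norm_nonneg (u n), norm_nonneg (u (n-1)),
    norm_nonneg u, sq_nonneg (‖u‖^2)]

/-- the gradient element of ℓ². -/
def Gu (d : ℝ) (u : Esp) : Esp := ⟨gseq d u, gseq_memℓp d u⟩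

@[simp] lemma Gu_apply (d : ℝ) (u : Esp) (n : ℤ) : (Gu d u) n = gseq d u n := rfl

/-- pointwise expansion of the Hamiltonian density -/
lemma pointwise_expand (d : ℝ) (A B a b : Vsp) :
    d/2*‖(A+a)-(B+b)‖^2 - 1/4*‖A+a‖^4
    = (d/2*‖A-B‖^2 - 1/4*‖A‖^4) + (d*⟪A-B,a-b⟫ - ‖A‖^2*⟪A,a⟫)
      + (d/2*‖a-b‖^2
        - 1/4*(4*⟪A,a⟫^2 + 2*‖A‖^2*‖a‖^2 + 4*⟪A,a⟫*‖a‖^2 + ‖a‖^4)) := by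
  have h1 : (A+a)-(B+b) = (A-B)+(a-b) := by abel
  have h2 : ‖(A-B)+(a-b)‖^2 = ‖A-B‖^2 + 2*⟪A-B,a-b⟫ + ‖a-b‖^2 := norm_add_sq_real _ _
  have h3 : ‖A+a‖^2 = ‖A‖^2 + 2*⟪A,a⟫ + ‖a‖^2 := norm_add_sq_real _ _
  have h4 : ‖A+a‖^4 = (‖A+a‖^2)^2 := by ring
  have h5 : ‖A‖^4 = (‖A‖^2)^2 := by ring
  rw [h1, h2, h4, h3, h5]; ring

/-- summation by parts for the discrete Laplacian -/
lemma sbp (u h : Esp) :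
    ∑' n : ℤ, ⟪u n - u (n-1), h n - h (n-1)⟫
    = -∑' n : ℤ, ⟪u (n+1) - (2:ℝ) • u n + u (n-1), h n⟫ := by
  have hs : Summable fun n : ℤ => ⟪u n - u (n-1), h n⟫ :=
    summable_inner_seq _ _ (sq_summable_diff u u) (sq_summable h)
  have hq : Summable fun n : ℤ => ⟪u n - u (n-1), h (n-1)⟫ :=
    summable_inner_seq _ _ (sq_summable_diff u u) (sq_summable_sub h)
  have hq' : Summable fun n : ℤ => ⟪u (n+1) - u n, h n⟫ := by
    have h2 := hq.comp_injective (add_left_injective (1:ℤ))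
    refine h2.congr fun n => ?_
    show ⟪u (n+1) - u (n+1-1), h (n+1-1)⟫ = _
    simp only [add_sub_cancel_right]
  calc ∑' n : ℤ, ⟪u n - u (n-1), h n - h (n-1)⟫
      = ∑' n : ℤ, (⟪u n - u (n-1), h n⟫ - ⟪u n - u (n-1), h (n-1)⟫) :=
        tsum_congr fun n => inner_sub_right _ _ _
    _ = (∑' n : ℤ, ⟪u n - u (n-1), h n⟫) - ∑' n : ℤ, ⟪u n - u (n-1), h (n-1)⟫ :=
        Summable.tsum_sub hs hq
    _ = (∑' n : ℤ, ⟪u n - u (n-1), h n⟫) - ∑' n : ℤ, ⟪u (n+1) - u n, h n⟫ := by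
        congr 1
        rw [← (Equiv.addRight (1:ℤ)).tsum_eq (fun n : ℤ => ⟪u n - u (n-1), h (n-1)⟫)]
        exact tsum_congr fun n => by simp only [Equiv.coe_addRight, add_sub_cancel_right]
    _ = ∑' n : ℤ, (⟪u n - u (n-1), h n⟫ - ⟪u (n+1) - u n, h n⟫) := (Summable.tsum_sub hs hq').symm
    _ = ∑' n : ℤ, -⟪u (n+1) - (2:ℝ) • u n + u (n-1), h n⟫ := by
        refine tsum_congr fun n => ?_
        rw [← inner_sub_left, ← inner_neg_left]
        congr 1
        rw [two_smul]
        abel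
    _ = -∑' n : ℤ, ⟪u (n+1) - (2:ℝ) • u n + u (n-1), h n⟫ := tsum_neg

lemma lap_sq_summable (u : Esp) :
    Summable fun n : ℤ => ‖u (n+1) - (2:ℝ) • u n + u (n-1)‖^2 := by
  refine Summable.of_nonneg_of_le (fun n => sq_nonneg _) (fun n => ?_)
    ((((sq_summable_add u).mul_left 3).add ((sq_summable u).mul_left 12)).add
      ((sq_summable_sub u).mul_left 3))
  have hb : ‖u (n+1) - (2:ℝ) • u n + u (n-1)‖ ≤ ‖u (n+1)‖ + 2*‖u n‖ + ‖u (n-1)‖ := by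
    refine (norm_add_le _ _).trans ?_
    have := norm_sub_le (u (n+1)) ((2:ℝ) • u n)
    rw [norm_smul, Real.norm_eq_abs, abs_of_nonneg (by norm_num : (0:ℝ) ≤ 2)] at this
    linarith
  have h0 := norm_nonneg (u (n+1) - (2:ℝ) • u n + u (n-1))
  nlinarith [sq_nonneg (‖u (n+1)‖ - 2*‖u n‖), sq_nonneg (‖u (n+1)‖ - ‖u (n-1)‖),
    sq_nonneg (2*‖u n‖ - ‖u (n-1)‖), norm_nonneg (u (n+1)), norm_nonneg (u n),
    norm_nonneg (u (n-1))]

lemma Ut_summable (u h : Esp) : Summable fun n : ℤ => ‖u n‖^2 * ⟪u n, h n⟫ := by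
  have hx : Summable fun n : ℤ => ‖(‖u n‖^2 • u n : Vsp)‖^2 := by
    refine Summable.of_nonneg_of_le (fun n => sq_nonneg _) (fun n => ?_)
      ((sq_summable u).mul_left (‖u‖^4))
    rw [norm_smul, Real.norm_eq_abs, abs_of_nonneg (sq_nonneg _)]
    have h1 := apply_le_norm u n
    have h2 := norm_nonneg (u n)
    have h3 := norm_nonneg u
    nlinarith [pow_le_pow_left₀ h2 h1 2, sq_nonneg (‖u n‖^2), mul_le_mul
      (pow_le_pow_left₀ h2 h1 2) (pow_le_pow_left₀ h2 h1 2) (sq_nonneg _) (sq_nonneg _)]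
  refine (summable_inner_seq _ _ hx (sq_summable h)).congr fun n => ?_
  exact real_inner_smul_left _ _ _

lemma inner_Gu (d : ℝ) (u h : Esp) :
    ⟪Gu d u, h⟫ = d * (∑' n : ℤ, ⟪u (n+1) - (2:ℝ) • u n + u (n-1), h n⟫)
      + ∑' n : ℤ, ‖u n‖^2 * ⟪u n, h n⟫ := by
  have hW : Summable fun n : ℤ => ⟪u (n+1) - (2:ℝ) • u n + u (n-1), h n⟫ :=
    summable_inner_seq _ _ (lap_sq_summable u) (sq_summable h)
  rw [lp.inner_eq_tsum]
  calc ∑' n : ℤ, ⟪(Gu d u) n, h n⟫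
      = ∑' n : ℤ, (d * ⟪u (n+1) - (2:ℝ) • u n + u (n-1), h n⟫ + ‖u n‖^2 * ⟪u n, h n⟫) := by
        refine tsum_congr fun n => ?_
        rw [Gu_apply]
        simp only [gseq, inner_add_left, real_inner_smul_left]
    _ = (∑' n : ℤ, d * ⟪u (n+1) - (2:ℝ) • u n + u (n-1), h n⟫)
        + ∑' n : ℤ, ‖u n‖^2 * ⟪u n, h n⟫ := Summable.tsum_add (hW.mul_left d) (Ut_summable u h)
    _ = d * (∑' n : ℤ, ⟪u (n+1) - (2:ℝ) • u n + u (n-1), h n⟫)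
        + ∑' n : ℤ, ‖u n‖^2 * ⟪u n, h n⟫ := by rw [tsum_mul_left]

/-- second-order error term -/
def Ed (d : ℝ) (u h : Esp) (n : ℤ) : ℝ :=
  d/2*‖h n - h (n-1)‖^2
    - 1/4*(4*⟪u n, h n⟫^2 + 2*‖u n‖^2*‖h n‖^2 + 4*⟪u n, h n⟫*‖h n‖^2 + ‖h n‖^4)

lemma Ed_bound (d : ℝ) (u h : Esp) (n : ℤ) :
    |Ed d u h n| ≤ (|d| + 3/2*‖u‖^2 + ‖u‖*‖h‖ + ‖h‖^2) * (‖h n‖^2 + ‖h (n-1)‖^2) := by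
  have hEd : Ed d u h n = d/2*‖h n - h (n-1)‖^2
      - 1/4*(4*⟪u n, h n⟫^2 + 2*‖u n‖^2*‖h n‖^2 + 4*⟪u n, h n⟫*‖h n‖^2 + ‖h n‖^4) := rfl
  have hX2 : ‖h n - h (n-1)‖^2 ≤ 2*(‖h n‖^2 + ‖h (n-1)‖^2) := by
    have := norm_sub_le (h n) (h (n-1))
    nlinarith [sq_nonneg (‖h n‖ - ‖h (n-1)‖), norm_nonneg (h n), norm_nonneg (h (n-1)),
      norm_nonneg (h n - h (n-1))]
  have hXnn : (0:ℝ) ≤ ‖h n - h (n-1)‖^2 := sq_nonneg _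
  have hSnn : (0:ℝ) ≤ ‖h n‖^2 + ‖h (n-1)‖^2 := by positivity
  have ht : |⟪u n, h n⟫| ≤ ‖u‖ * ‖h n‖ :=
    (abs_real_inner_le_norm _ _).trans
      (mul_le_mul_of_nonneg_right (apply_le_norm u n) (norm_nonneg _))
  have hhn : ‖h n‖ ≤ ‖h‖ := apply_le_norm h n
  have hun : ‖u n‖ ≤ ‖u‖ := apply_le_norm u n
  have h2nn := norm_nonneg (h n); have h1nn := norm_nonneg (h (n-1))
  have hunn := norm_nonneg u; have hhnn := norm_nonneg h
  have h5 : ⟪u n, h n⟫^2 ≤ ‖u‖^2 * ‖h n‖^2 := by nlinarith [abs_nonneg ⟪u n, h n⟫, sq_abs ⟪u n, h n⟫]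
  have h6 : ‖u n‖^2 * ‖h n‖^2 ≤ ‖u‖^2 * ‖h n‖^2 :=
    mul_le_mul_of_nonneg_right (pow_le_pow_left₀ (norm_nonneg _) hun 2) (sq_nonneg _)
  have h7 : |⟪u n, h n⟫ * ‖h n‖^2| ≤ (‖u‖*‖h‖) * ‖h n‖^2 := by
    rw [abs_mul, abs_of_nonneg (sq_nonneg (‖h n‖))]
    exact mul_le_mul_of_nonneg_right
      (ht.trans (mul_le_mul_of_nonneg_left hhn hunn)) (sq_nonneg _)
  have h7' := abs_le.1 h7
  have h8 : ‖h n‖^4 ≤ ‖h‖^2 * ‖h n‖^2 := by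
    have : ‖h n‖^2 ≤ ‖h‖^2 := pow_le_pow_left₀ h2nn hhn 2
    nlinarith [sq_nonneg (‖h n‖)]
  have hdabs : |d/2*‖h n - h (n-1)‖^2| ≤ |d| * (‖h n‖^2 + ‖h (n-1)‖^2) := by
    rw [abs_mul, abs_of_nonneg hXnn]
    have h9 : |d/2| = |d|/2 := by rw [abs_div]; norm_num
    rw [h9]
    have := mul_le_mul_of_nonneg_left hX2 (by positivity : (0:ℝ) ≤ |d|/2)
    linarith
  have hd' := abs_le.1 hdabs
  have p1 : (0:ℝ) ≤ ‖u‖^2 * ‖h (n-1)‖^2 := by positivity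
  have p2 : (0:ℝ) ≤ (‖u‖*‖h‖) * ‖h (n-1)‖^2 := by positivity
  have p3 : (0:ℝ) ≤ ‖h‖^2 * ‖h (n-1)‖^2 := by positivity
  have p4 : (0:ℝ) ≤ ‖h‖^2 * ‖h n‖^2 := by positivity
  have p5 : (0:ℝ) ≤ ‖u‖^2 * ‖h n‖^2 := by positivity
  rw [abs_le, hEd]
  constructor
  · linarith [h5, h6, h7'.2, h8, hd'.1, p1, p2, p3, p4, sq_nonneg (‖h n‖^2)]
  · linarith [sq_nonneg ⟪u n, h n⟫, sq_nonneg (‖h n‖^2), h5, h6, h7'.1, hd'.2, p1, p2, p3, p4,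
      mul_nonneg (sq_nonneg (‖u n‖)) (sq_nonneg (‖h n‖))]

lemma Ed_summable (d : ℝ) (u h : Esp) : Summable (Ed d u h) := by
  refine Summable.of_abs (Summable.of_nonneg_of_le (fun n => abs_nonneg _)
    (fun n => Ed_bound d u h n)
    ((((sq_summable h).add (sq_summable_sub h))).mul_left _))

lemma tsum_shift_sq (h : Esp) : ∑' n : ℤ, ‖h (n-1)‖^2 = ∑' n : ℤ, ‖h n‖^2 :=
  (Equiv.subRight (1:ℤ)).tsum_eq fun n : ℤ => ‖h n‖^2

lemma Ed_tsum_bound (d : ℝ) (u h : Esp) :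
    |∑' n, Ed d u h n| ≤ (|d| + 3/2*‖u‖^2 + ‖u‖*‖h‖ + ‖h‖^2) * (2 * ‖h‖^2) := by
  have habs : Summable fun n => |Ed d u h n| := (Ed_summable d u h).abs
  have hbig : Summable fun n : ℤ =>
      (|d| + 3/2*‖u‖^2 + ‖u‖*‖h‖ + ‖h‖^2) * (‖h n‖^2 + ‖h (n-1)‖^2) :=
    (((sq_summable h).add (sq_summable_sub h))).mul_left _
  calc |∑' n, Ed d u h n| ≤ ∑' n, |Ed d u h n| := by
        rw [← Real.norm_eq_abs]
        exact (norm_tsum_le_tsum_norm (by simpa [Real.norm_eq_abs] using habs)).trans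
          (le_of_eq (tsum_congr fun n => Real.norm_eq_abs _))
    _ ≤ ∑' n : ℤ, (|d| + 3/2*‖u‖^2 + ‖u‖*‖h‖ + ‖h‖^2) * (‖h n‖^2 + ‖h (n-1)‖^2) :=
        Summable.tsum_le_tsum (fun n => Ed_bound d u h n) habs hbig
    _ = (|d| + 3/2*‖u‖^2 + ‖u‖*‖h‖ + ‖h‖^2) * (2 * ‖h‖^2) := by
        rw [tsum_mul_left, Summable.tsum_add (sq_summable h) (sq_summable_sub h), tsum_shift_sq,
          ← norm_sq_eq h]
        ring

/-- The Hamiltonian density. -/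
def Fd (d : ℝ) (u : Esp) (n : ℤ) : ℝ := d / 2 * ‖u n - u (n - 1)‖ ^ 2 - 1 / 4 * ‖u n‖ ^ 4

lemma Fd_summable' (d : ℝ) (u : Esp) : Summable (Fd d u) := Fd_summable d u

/-- The main identity: the first-order Taylor remainder equals `-∑' Ed`. -/
lemma main_identity (d : ℝ) (u h : Esp) :
    (-∑' n, Fd d (u + h) n) - (-∑' n, Fd d u n) - ⟪Gu d u, h⟫ = -∑' n, Ed d u h n := by
  have hDD : Summable fun n : ℤ => ⟪u n - u (n-1), h n - h (n-1)⟫ :=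
    summable_inner_seq _ _ (sq_summable_diff u u) (sq_summable_diff h h)
  have hUt := Ut_summable u h
  have hEd := Ed_summable d u h
  have hψ : Summable fun n : ℤ =>
      d * ⟪u n - u (n-1), h n - h (n-1)⟫ - ‖u n‖^2 * ⟪u n, h n⟫ + Ed d u h n :=
    ((hDD.mul_left d).sub hUt).add hEd
  have hpt : ∀ n : ℤ, Fd d (u + h) n = Fd d u n +
      (d * ⟪u n - u (n-1), h n - h (n-1)⟫ - ‖u n‖^2 * ⟪u n, h n⟫ + Ed d u h n) := by
    intro n
    have hc : ∀ m : ℤ, (u + h) m = u m + h m := fun m => by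
      simp [lp.coeFn_add]
    simp only [Fd, Ed, hc]
    have := pointwise_expand d (u n) (u (n-1)) (h n) (h (n-1))
    linarith [this]
  have h1 : ∑' n, Fd d (u + h) n = (∑' n, Fd d u n)
      + (d * (∑' n : ℤ, ⟪u n - u (n-1), h n - h (n-1)⟫)
        - (∑' n : ℤ, ‖u n‖^2 * ⟪u n, h n⟫) + ∑' n, Ed d u h n) := by
    rw [tsum_congr hpt, Summable.tsum_add (Fd_summable' d u) hψ]
    congr 1
    rw [Summable.tsum_add ((hDD.mul_left d).sub hUt) hEd, Summable.tsum_sub (hDD.mul_left d) hUt, tsum_mul_left]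
  rw [h1, inner_Gu d u h, sbp u h]
  ring

lemma hasGradient (d : ℝ) (u : Esp) :
    HasGradientAt (fun w : Esp => -∑' n, Fd d w n) (Gu d u) u := by
  rw [hasGradientAt_iff_isLittleO_nhds_zero, Asymptotics.isLittleO_iff]
  intro c hc
  have hK : (0:ℝ) < |d| + 3/2*‖u‖^2 + ‖u‖ + 1 := by positivity
  set K := |d| + 3/2*‖u‖^2 + ‖u‖ + 1 with hK_def
  filter_upwards [Metric.ball_mem_nhds (0:Esp)
    (lt_min one_pos (by positivity : (0:ℝ) < c / (2*K)))] with h hh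
  rw [mem_ball_zero_iff, lt_min_iff] at hh
  obtain ⟨hh1, hh2⟩ := hh
  have key := main_identity d u h
  have hbd := Ed_tsum_bound d u h
  have hcoeff : |d| + 3/2*‖u‖^2 + ‖u‖*‖h‖ + ‖h‖^2 ≤ K := by
    rw [hK_def]
    nlinarith [norm_nonneg u, norm_nonneg h]
  have hnn : (0:ℝ) ≤ 2*‖h‖^2 := by positivity
  have hchain : |∑' n, Ed d u h n| ≤ K * (2*‖h‖^2) :=
    hbd.trans (mul_le_mul_of_nonneg_right hcoeff hnn)
  have h2K : 2*K*‖h‖ ≤ c := by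
    rw [lt_div_iff₀ (by positivity : (0:ℝ) < 2*K)] at hh2
    linarith
  calc ‖(-∑' n, Fd d (u + h) n) - (-∑' n, Fd d u n) - ⟪Gu d u, h⟫‖
      = |∑' n, Ed d u h n| := by rw [key, Real.norm_eq_abs, abs_neg]
    _ ≤ K * (2*‖h‖^2) := hchain
    _ = (2*K*‖h‖) * ‖h‖ := by ring
    _ ≤ c * ‖h‖ := mul_le_mul_of_nonneg_right h2K (norm_nonneg h)

end DNLSaux

/-- Differentiability and gradient of the DNLS Hamiltonian
`ℋ(u) = −Σ_n [(d/2)|u_n − u_{n−1}|² − (1/4)|u_n|⁴]` on `ℓ²(ℤ, ℝ²)`: the defining series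
converges, `ℋ` is Fréchet differentiable, and its gradient is
`(∇ℋ(u))_n = d(u_{n+1} − 2u_n + u_{n−1}) + |u_n|²u_n`. -/
theorem dnls_hamiltonian_gradient (d : ℝ)
    (H : lp (fun _ : ℤ => EuclideanSpace ℝ (Fin 2)) 2 → ℝ)
    (hH : ∀ u : lp (fun _ : ℤ => EuclideanSpace ℝ (Fin 2)) 2,
      H u = -∑' n : ℤ, (d / 2 * ‖u n - u (n - 1)‖ ^ 2 - 1 / 4 * ‖u n‖ ^ 4)) :
    (∀ u : lp (fun _ : ℤ => EuclideanSpace ℝ (Fin 2)) 2,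
      Summable (fun n : ℤ => d / 2 * ‖u n - u (n - 1)‖ ^ 2 - 1 / 4 * ‖u n‖ ^ 4)) ∧
    Differentiable ℝ H ∧
    (∀ (u : lp (fun _ : ℤ => EuclideanSpace ℝ (Fin 2)) 2) (n : ℤ),
      gradient H u n = d • (u (n + 1) - (2 : ℝ) • u n + u (n - 1)) + ‖u n‖ ^ 2 • u n) := by
  have hHeq : H = fun u : Esp => -∑' n, Fd d u n := funext fun u => hH u
  refine ⟨fun u => Fd_summable d u, ?_, ?_⟩
  · rw [hHeq]
    exact fun u => (hasGradient d u).hasFDerivAt.differentiableAt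
  · intro u n
    rw [hHeq, (hasGradient d u).gradient]
    rfl
end
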